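/- arXiv:2311.14965 — 10 statements merged into one kernel-verified Lean document; each statement's English description precedes it below -/
import Mathlib

section
/- In the category of sets, every codirected limit cone has the following property: for every injective map q : Q → L from a finite set Q into the limit object L, there exists an index i such that the composite π_i ∘ q of q with the limit projection π_i is injective. -/
open CategoryTheory Limits

theorem stmt0 {I : Type u} [PartialOrder I]
    (hcod : ∀ s : Finset I, ∃ j : I, ∀ i ∈ s, j ≤ i)
    (D : I ⥤ Type u) (c : Cone D) (hc : IsLimit c)
    (Q : Type u) [Finite Q] (q : Q → c.pt) (hq : Function.Injective q) :
    ∃ i : I, Function.Injective (c.π.app i ∘ q) := by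
  classical
  cases nonempty_fintype Q
  obtain ⟨j0, -⟩ := hcod ∅
  have key : ∀ x y : Q, x ≠ y → ∃ i : I, c.π.app i (q x) ≠ c.π.app i (q y) := by
    intro x y hxy
    by_contra h
    push_neg at h
    apply hxy
    apply hq
    apply (Types.isLimitEquivSections hc).injective
    ext i
    simpa [Types.isLimitEquivSections_apply] using h i
  choose f hf using key
  set s : Finset I :=
    (Finset.univ : Finset (Q × Q)).image
      (fun p : Q × Q => if h : p.1 ≠ p.2 then f p.1 p.2 h else j0) with hs
  obtain ⟨j, hj⟩ := hcod s
  refine ⟨j, ?_⟩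
  intro x y hxy
  by_contra hne
  have hmem : f x y hne ∈ s := by
    refine Finset.mem_image.2 ⟨(x, y), Finset.mem_univ _, ?_⟩
    simp [hne]
  have hle : j ≤ f x y hne := hj _ hmem
  have hw := c.w (homOfLE hle)
  have hx : c.π.app (f x y hne) (q x) = D.map (homOfLE hle) (c.π.app j (q x)) := by
    rw [← hw]; rfl
  have hy : c.π.app (f x y hne) (q y) = D.map (homOfLE hle) (c.π.app j (q y)) := by
    rw [← hw]; rfl
  apply hf x y hne
  rw [hx, hy]
  simp only [Function.comp] at hxy
  rw [hxy]
end

section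
/- Let K be a field and let (π_i : L → L_i)_{i ∈ I} be a limit cone of a codirected diagram of K-vector spaces. If x_1, ..., x_n are linearly independent vectors in L, then there exists i ∈ I such that π_i(x_1), ..., π_i(x_n) are linearly independent in L_i. -/
open CategoryTheory Limits

/-!
The relations `g : Fin n → K` with `∑ g k • π_i (x k) = 0` form a subspace `W i` of `Kⁿ`, and
`W` is monotone in `i`. By finite dimensionality and codirectedness some `W i` lies in every
`W j`, hence in their intersection, which is the space of relations among the `x k` since an
element of a limit is determined by its projections. That space is zero, so `W i = 0`.
-/

theorem Monotone.exists_forall_le_of_wellFoundedLT {ι α : Type*} [Preorder ι]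
    [IsCodirectedOrder ι] [Nonempty ι] [PartialOrder α] [WellFoundedLT α] {f : ι → α}
    (hf : Monotone f) : ∃ i, ∀ j, f i ≤ f j := by
  obtain ⟨_, ⟨i, rfl⟩, hmin⟩ := wellFounded_lt.has_min (Set.range f) (Set.range_nonempty f)
  refine ⟨i, fun j => ?_⟩
  obtain ⟨k, hki, hkj⟩ := exists_le_le i j
  rw [← (hf hki).eq_of_not_lt (hmin _ ⟨k, rfl⟩)]
  exact hf hkj

theorem Fintype.ker_linearCombination_le_comp {R M N ι : Type*} [Semiring R] [AddCommMonoid M]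
    [Module R M] [AddCommMonoid N] [Module R N] [Fintype ι] (f : M →ₗ[R] N) (v : ι → M) :
    LinearMap.ker (Fintype.linearCombination R v) ≤
      LinearMap.ker (Fintype.linearCombination R (f ∘ v)) := by
  intro g hg
  simp only [LinearMap.mem_ker, Fintype.linearCombination_apply, Function.comp_apply] at hg ⊢
  simp only [← map_smul, ← map_sum, hg, map_zero]

theorem ModuleCat.iInf_ker_linearCombination_le_of_isLimit {R J : Type u} {ι : Type*} [Ring R]
    [Category.{u} J] [Fintype ι] {D : J ⥤ ModuleCat.{u} R} {c : Cone D} (hc : IsLimit c)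
    (x : ι → c.pt) :
    ⨅ j, LinearMap.ker (Fintype.linearCombination R (fun k => c.π.app j (x k))) ≤
      LinearMap.ker (Fintype.linearCombination R x) := by
  intro g hg
  rw [LinearMap.mem_ker]
  refine Concrete.isLimit_ext D hc _ _ fun j => ?_
  have hgj := Submodule.mem_iInf _ |>.mp hg j
  simpa [Fintype.linearCombination_apply, map_sum, map_smul] using hgj

theorem stmt1 {K : Type u} [Field K] {I : Type u} [PartialOrder I]
    (hcod : ∀ s : Finset I, ∃ j : I, ∀ i ∈ s, j ≤ i)
    (D : I ⥤ ModuleCat.{u} K) (c : Cone D) (hc : IsLimit c)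
    {n : ℕ} (x : Fin n → c.pt) (hx : LinearIndependent K x) :
    ∃ i : I, LinearIndependent K (fun k : Fin n => c.π.app i (x k)) := by
  classical
  have : Nonempty I := let ⟨j, _⟩ := hcod ∅; ⟨j⟩
  have : IsCodirectedOrder I :=
    ⟨fun a b => let ⟨j, hj⟩ := hcod {a, b}; ⟨j, hj a (by simp), hj b (by simp)⟩⟩
  let W i := LinearMap.ker (Fintype.linearCombination K (fun k => c.π.app i (x k)))
  have hW : Monotone W := fun j i hji => by
    have hπ : (fun k => c.π.app i (x k)) = D.map (homOfLE hji) ∘ fun k => c.π.app j (x k) := by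
      ext k; rw [← c.w (homOfLE hji)]; rfl
    change W j ≤ LinearMap.ker (Fintype.linearCombination K _)
    rw [hπ]
    exact Fintype.ker_linearCombination_le_comp (D.map (homOfLE hji)).hom _
  obtain ⟨i, hi⟩ := hW.exists_forall_le_of_wellFoundedLT
  refine ⟨i, ?_⟩
  rw [linearIndependent_iff_injective_fintypeLinearCombination, ← LinearMap.ker_eq_bot,
    eq_bot_iff]
  calc W i ≤ ⨅ j, W j := le_iInf hi
    _ ≤ LinearMap.ker (Fintype.linearCombination K x) :=
      ModuleCat.iInf_ker_linearCombination_le_of_isLimit hc x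
    _ = ⊥ := LinearMap.ker_eq_bot.mpr hx.fintypeLinearCombination_injective
end

section
/- Let K be a field and let (π_i : L → L_i)_{i ∈ I} be a limit cone of a codirected diagram of K-vector spaces. For every injective linear map q : Q → L with Q finite-dimensional, there exists i ∈ I such that π_i ∘ q is injective. -/
/-!
The kernels of `π_i ∘ q` form a family of subspaces of `Q` that shrinks as `i` decreases. Since `Q`
is finite-dimensional, one of them is minimal, and codirectedness makes the minimal one contained
in all the others. Their intersection is trivial because the `π_i` jointly detect zero in the
limit and `q` is injective.
-/

open CategoryTheory Limits

theorem CategoryTheory.Limits.Cone.ker_π_app_le {K J : Type*} [Ring K] [Category J]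
    {D : J ⥤ ModuleCat K} (c : Cone D) {i j : J} (f : i ⟶ j) :
    LinearMap.ker (c.π.app i).hom ≤ LinearMap.ker (c.π.app j).hom := by
  intro x hx
  rw [LinearMap.mem_ker, ← c.w f, ModuleCat.hom_comp, LinearMap.comp_apply, hx, map_zero]

theorem CategoryTheory.Limits.IsLimit.iInf_ker_π_app_eq_bot {K : Type*} {J : Type v} [Ring K]
    [Category J] {D : J ⥤ ModuleCat.{v} K} {c : Cone D} (hc : IsLimit c) :
    (⨅ i, LinearMap.ker (c.π.app i).hom : Submodule K c.pt) = ⊥ := by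
  refine eq_bot_iff.mpr fun x hx => ?_
  rw [Submodule.mem_iInf] at hx
  exact Concrete.isLimit_ext D hc x 0 fun i => by simpa using hx i

theorem stmt2 {K : Type u} [Field K] {I : Type u} [PartialOrder I]
    (hcod : ∀ s : Finset I, ∃ j : I, ∀ i ∈ s, j ≤ i)
    (D : I ⥤ ModuleCat.{u} K) (c : Cone D) (hc : IsLimit c)
    (Q : Type u) [AddCommGroup Q] [Module K Q] [FiniteDimensional K Q]
    (q : Q →ₗ[K] c.pt) (hq : Function.Injective q) :
    ∃ i : I, Function.Injective (fun z : Q => c.π.app i (q z)) := by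
  have : Nonempty I := (hcod ∅).nonempty
  have : IsCodirectedOrder I := ⟨fun i j => by
    classical
    obtain ⟨k, hk⟩ := hcod {i, j}
    exact ⟨k, hk i (by simp), hk j (by simp)⟩⟩
  let N : I → Submodule K Q := fun i => (LinearMap.ker (c.π.app i).hom).comap q
  have hN : Monotone N := fun k j hkj => Submodule.comap_mono (c.ker_π_app_le (homOfLE hkj))
  obtain ⟨i, hi⟩ := hN.exists_forall_le_of_wellFoundedLT
  refine ⟨i, (LinearMap.ker_eq_bot (f := (c.π.app i).hom ∘ₗ q)).mp (eq_bot_iff.mpr ?_)⟩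
  calc LinearMap.ker ((c.π.app i).hom ∘ₗ q) = N i := LinearMap.ker_comp _ _
    _ ≤ ⨅ j, N j := le_iInf hi
    _ = (⨅ j, LinearMap.ker (c.π.app j).hom).comap q := (Submodule.comap_iInf _ _).symm
    _ = ⊥ := by rw [hc.iInf_ker_π_app_eq_bot, Submodule.comap_bot, LinearMap.ker_eq_bot.mpr hq]
end

section
/- Consider a faithful functor U : K → Set that preserves codirected limits and monomorphisms. If Q is an object of K such that U(Q) is finite, then for every codirected limit cone (π_i : L → D_i)_{i ∈ I} in K and every monomorphism m : Q → L, there exists i ∈ I such that π_i ∘ m is a monomorphism. -/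
/-!
Applying `U` turns the cone into a codirected limit of sets, in which points are determined by
their projections, and turns `m` into an injection of a finite set. Each of the finitely many
pairs of distinct points is separated at some stage; below a common lower bound of these stages
all pairs stay separated, and faithfulness of `U` reflects the resulting injection to a mono.
-/

open CategoryTheory Limits

theorem isCofiltered_of_forall_finset_exists_le {I : Type*} [Preorder I]
    (h : ∀ s : Finset I, ∃ j : I, ∀ i ∈ s, j ≤ i) : IsCofiltered I := by
  have : Nonempty I := let ⟨j, _⟩ := h ∅; ⟨j⟩
  have : IsCodirectedOrder I := ⟨fun a b => by
    classical
    obtain ⟨j, hj⟩ := h {a, b}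
    exact ⟨j, hj a (by simp), hj b (by simp)⟩⟩
  infer_instance

theorem Types.exists_injective_π_comp_of_isCofiltered {J : Type*} [Category J] [IsCofiltered J]
    {F : J ⥤ Type*} {c : Cone F} (hc : IsLimit c) {X : Type*} [Finite X] {g : X → c.pt}
    (hg : Function.Injective g) : ∃ j, Function.Injective (c.π.app j ∘ g) := by
  have separate : ∀ p : {p : X × X // p.1 ≠ p.2},
      ∃ i, c.π.app i (g p.1.1) ≠ c.π.app i (g p.1.2) := fun p =>
    not_forall.mp fun h => p.2 (hg (Concrete.isLimit_ext F hc _ _ h))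
  choose i hi using separate
  obtain ⟨j, hj⟩ := IsCofiltered.inf_objs_exists (Set.finite_range i).toFinset
  refine ⟨j, fun x y hxy => by_contra fun hne => hi ⟨(x, y), hne⟩ ?_⟩
  obtain ⟨f⟩ := hj (Set.Finite.mem_toFinset _ |>.mpr ⟨⟨(x, y), hne⟩, rfl⟩)
  rw [← c.w f]
  exact congrArg (F.map f) hxy

theorem stmt3 {K : Type u} [Category.{v} K] (U : K ⥤ Type v) [U.Faithful]
    (hmono : ∀ {X Y : K} (f : X ⟶ Y), Mono f → Mono (U.map f))
    {I : Type v} [PartialOrder I]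
    (hcod : ∀ s : Finset I, ∃ j : I, ∀ i ∈ s, j ≤ i)
    (D : I ⥤ K) [PreservesLimit D U]
    (c : Cone D) (hc : IsLimit c)
    (Q : K) [Finite (U.obj Q)] (m : Q ⟶ c.pt) [Mono m] :
    ∃ i : I, Mono (m ≫ c.π.app i) := by
  have := isCofiltered_of_forall_finset_exists_le hcod
  obtain ⟨i, hi⟩ := Types.exists_injective_π_comp_of_isCofiltered (isLimitOfPreserves U hc)
    ((mono_iff_injective _).mp (hmono m inferInstance))
  refine ⟨i, U.mono_of_mono_map ((mono_iff_injective _).mpr ?_)⟩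
  rw [U.map_comp]
  exact hi
end

section
/- If I is a countably codirected poset and I = ⋃_{k ∈ ℕ} I_k is a countable decomposition of I into subsets, then some I_k is initial in I, i.e., every element of I lies above some element of I_k. -/
theorem stmt5 {I : Type u} [PartialOrder I]
    (hcod : ∀ s : Set I, s.Countable → ∃ j : I, ∀ i ∈ s, j ≤ i)
    (Iks : ℕ → Set I) (hcover : (⋃ k : ℕ, Iks k) = Set.univ) :
    ∃ k : ℕ, ∀ i : I, ∃ j ∈ Iks k, j ≤ i := by
  by_contra h
  push_neg at h
  choose f hf using h
  obtain ⟨j, hj⟩ := hcod (Set.range f) (Set.countable_range f)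
  have : j ∈ ⋃ k : ℕ, Iks k := hcover ▸ Set.mem_univ j
  obtain ⟨k, hk⟩ := Set.mem_iUnion.mp this
  exact hf k j hk (hj _ (Set.mem_range_self k))
end

section
/- Let C be a category in which all monomorphisms split, and consider a pullback square consisting of monomorphisms i : C → B, i' : C → B', m : B → A, m' : B' → A with m ∘ i = m' ∘ i'. Suppose there exist morphisms e : A → B with e ∘ m = id_B and e' : B' → C with e' ∘ i' = id_C satisfying e ∘ m' = i ∘ e'. Then this pullback is absolute: for every functor F : C → D, the image square under F is again a pullback square in D. -/
open CategoryTheory Limits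

theorem stmt9 {𝒞 : Type u} [Category.{v} 𝒞]
    (hsplit : ∀ {X Y : 𝒞} (f : X ⟶ Y), Mono f → ∃ g : Y ⟶ X, f ≫ g = 𝟙 X)
    {A B B' C : 𝒞} (i : C ⟶ B) (i' : C ⟶ B') (m : B ⟶ A) (m' : B' ⟶ A)
    [Mono i] [Mono i'] [Mono m] [Mono m']
    (hpb : IsPullback i i' m m')
    (e : A ⟶ B) (he : m ≫ e = 𝟙 B)
    (e' : B' ⟶ C) (he' : i' ≫ e' = 𝟙 C)
    (hcomm : m' ≫ e = e' ≫ i) :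
    ∀ {D : Type u'} [Category.{v'} D] (F : 𝒞 ⥤ D),
      IsPullback (F.map i) (F.map i') (F.map m) (F.map m') := by
  intro D _ F
  obtain ⟨r, hr⟩ := hsplit m' inferInstance
  have w : F.map i ≫ F.map m = F.map i' ≫ F.map m' := by
    rw [← F.map_comp, ← F.map_comp, hpb.w]
  have hfst : ∀ {X : D} (a : X ⟶ F.obj B) (b : X ⟶ F.obj B'),
      a ≫ F.map m = b ≫ F.map m' → (b ≫ F.map e') ≫ F.map i = a := by
    intro X a b hab
    calc (b ≫ F.map e') ≫ F.map i = b ≫ F.map (e' ≫ i) := by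
          rw [Category.assoc, F.map_comp]
      _ = b ≫ F.map m' ≫ F.map e := by rw [← hcomm, F.map_comp]
      _ = a ≫ F.map (m ≫ e) := by rw [← Category.assoc, ← hab, Category.assoc, F.map_comp]
      _ = a := by rw [he, F.map_id, Category.comp_id]
  refine IsPullback.of_isLimit
    (PullbackCone.IsLimit.mk w (fun s => s.snd ≫ F.map e')
      (fun s => hfst s.fst s.snd s.condition)
      (fun s => ?_) (fun s l hl hl' => ?_))
  · have key : e' ≫ i' ≫ m' ≫ r = m' ≫ e ≫ m ≫ r := by
      rw [← Category.assoc, ← Category.assoc, ← Category.assoc, ← Category.assoc]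
      congr 1
      rw [Category.assoc, ← hpb.w, ← Category.assoc, ← hcomm, Category.assoc]
    have hmr : F.map m' ≫ F.map r = 𝟙 _ := by rw [← F.map_comp, hr, F.map_id]
    calc (s.snd ≫ F.map e') ≫ F.map i' = (s.snd ≫ F.map e') ≫ F.map i' ≫
          F.map m' ≫ F.map r := by rw [hmr, Category.comp_id]
      _ = s.snd ≫ F.map (e' ≫ i' ≫ m' ≫ r) := by
          simp only [F.map_comp, Category.assoc]
      _ = s.snd ≫ F.map m' ≫ F.map e ≫ F.map m ≫ F.map r := by
          rw [key]; simp only [F.map_comp, Category.assoc]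
      _ = s.fst ≫ F.map m ≫ F.map e ≫ F.map m ≫ F.map r := by
          rw [← Category.assoc, ← s.condition, Category.assoc]
      _ = s.fst ≫ F.map m ≫ F.map r := by
          rw [← Category.assoc (F.map m), ← F.map_comp, he, F.map_id, Category.id_comp]
      _ = s.snd ≫ F.map m' ≫ F.map r := by
          rw [← Category.assoc, s.condition, Category.assoc]
      _ = s.snd := by rw [hmr, Category.comp_id]
  · calc l = l ≫ F.map (i' ≫ e') := by rw [he', F.map_id, Category.comp_id]
      _ = s.snd ≫ F.map e' := by rw [F.map_comp, ← Category.assoc, hl']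
end

section
/- The category of K-vector spaces has absolute intersections: for any two subspaces B, B' of a vector space A with intersection C = B ∩ B', there exist linear retractions e : A → B (with e restricting to the identity on B) and e' : B' → C (with e' restricting to the identity on C) such that e(x) = e'(x) for all x ∈ B', where we regard e'(x) ∈ C ⊆ B. -/
/-!
Choose a complement `E` of `B` with `B' ≤ (B ⊓ B') ⊔ E`: complement `B ⊓ B'` inside `B'` by
some `D`, which is then disjoint from `B`, and enlarge `D` to a complement of `B`. The
projection onto `B` along `E` then maps `B'` into `B ⊓ B'`, so it restricts to the retraction `e'`.
-/

theorem IsModularLattice.exists_isCompl_le_inf_sup {α : Type*} [Lattice α] [BoundedOrder α]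
    [IsModularLattice α] [ComplementedLattice α] (a b : α) :
    ∃ c, IsCompl a c ∧ b ≤ a ⊓ b ⊔ c := by
  obtain ⟨d, hd, hsup⟩ := exists_disjoint_and_sup_eq (inf_le_right : a ⊓ b ≤ b)
  have hdb : d ≤ b := hsup ▸ le_sup_right
  have had : Disjoint a d := by
    simpa [disjoint_iff, inf_assoc, inf_eq_right.mpr hdb] using hd
  obtain ⟨c, hdc, hca⟩ := had.symm.exists_isCompl
  exact ⟨c, hca.symm, hsup.ge.trans (sup_le_sup_left hdc _)⟩

theorem Submodule.projection_mem_of_mem_sup {R E : Type*} [Ring R] [AddCommGroup E] [Module R E]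
    {p q r : Submodule R E} (hpq : IsCompl p q) (hrp : r ≤ p) {x : E} (hx : x ∈ r ⊔ q) :
    p.projection q hpq x ∈ r := by
  obtain ⟨y, hy, z, hz, rfl⟩ := mem_sup.1 hx
  simpa [projection_apply_of_mem_left hpq (hrp hy), projection_apply_of_mem_right hpq hz] using hy

theorem stmt10 {K : Type u} [Field K] {A : Type v} [AddCommGroup A] [Module K A]
    (B B' : Submodule K A) :
    ∃ (e : A →ₗ[K] B) (e' : B' →ₗ[K] (B ⊓ B' : Submodule K A)),
      (∀ x : B, e (x : A) = x) ∧
      (∀ (z : A) (hz : z ∈ B ⊓ B'), (e' ⟨z, hz.2⟩ : A) = z) ∧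
      (∀ x : B', (e (x : A) : A) = (e' x : A)) := by
  obtain ⟨E, hBE, hB'⟩ := IsModularLattice.exists_isCompl_le_inf_sup B B'
  have hmaps : ∀ x ∈ B', B.projection E hBE x ∈ B ⊓ B' := fun x hx =>
    Submodule.projection_mem_of_mem_sup hBE inf_le_left (hB' hx)
  refine ⟨B.projectionOnto E hBE, (B.projection E hBE).restrict hmaps,
    Submodule.projectionOnto_apply_left hBE, fun z hz => ?_, fun x => rfl⟩
  exact Submodule.projection_apply_of_mem_left hBE hz.1
end

section
/- Every intersection (pullback of two monomorphisms) in the category of K-vector spaces is preserved by every functor from K-vector spaces to any category. -/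
/-!
Given subspaces `B, B'` of `A`, choose a complement `X` of `B ⊓ B'` and a complement `E` of
`B ⊔ B'`; then `A = (B ⊓ B') ⊕ (X ⊓ B) ⊕ (X ⊓ B') ⊕ E`, and `X ⊓ B' ⊔ E`, `X ⊓ B ⊔ E` are
complements of `B` and `B'` along which the projections onto `B` and `B'` commute. The
retractions `r, r'` of the inclusions they induce, together with the map `A → B ⊓ B'` that their
composite induces, satisfy equations which alone make the intersection square a pullback. Being
equations between composites, they survive any functor.
-/

open CategoryTheory Limits

universe u v w

section Lattice

variable {α : Type*} [Lattice α] [BoundedOrder α] [IsModularLattice α]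

theorem IsCompl.sup_inf_of_le {y x a : α} (hx : IsCompl y x) (h : y ≤ a) : y ⊔ x ⊓ a = a := by
  rw [← sup_inf_assoc_of_le _ h, hx.sup_eq_top, top_inf_eq]

theorem isCompl_inf_sup_of_isCompl {a b x e : α} (hx : IsCompl (a ⊓ b) x)
    (he : IsCompl (a ⊔ b) e) : IsCompl a (x ⊓ b ⊔ e) := by
  have hab : a ⊔ x ⊓ b = a ⊔ b :=
    le_antisymm (sup_le_sup_left inf_le_right a) <| sup_le le_sup_left <|
      (hx.sup_inf_of_le inf_le_right).symm.le.trans (sup_le_sup_right inf_le_left _)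
  refine Disjoint.isCompl_sup_right_of_isCompl_sup_left ?_ (hab ▸ he)
  rw [disjoint_iff, ← inf_assoc, inf_right_comm]
  exact hx.inf_eq_bot

theorem exists_isCompl_isCompl_sup_inf_eq_top [ComplementedLattice α] (a b : α) :
    ∃ a' b', IsCompl a a' ∧ IsCompl b b' ∧ a ⊓ b ⊔ a ⊓ b' ⊔ a' ⊓ b ⊔ a' ⊓ b' = ⊤ := by
  obtain ⟨x, hx⟩ := exists_isCompl (a ⊓ b)
  obtain ⟨e, he⟩ := exists_isCompl (a ⊔ b)
  have ha : IsCompl a (x ⊓ b ⊔ e) := isCompl_inf_sup_of_isCompl hx he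
  have hb : IsCompl b (x ⊓ a ⊔ e) :=
    isCompl_inf_sup_of_isCompl (inf_comm a b ▸ hx) (sup_comm a b ▸ he)
  refine ⟨_, _, ha, hb, eq_top_iff.2 ?_⟩
  calc ⊤ = a ⊔ b ⊔ e := he.sup_eq_top.symm
    _ = a ⊓ b ⊔ x ⊓ a ⊔ (a ⊓ b ⊔ x ⊓ b) ⊔ e := by
      rw [hx.sup_inf_of_le inf_le_left, hx.sup_inf_of_le inf_le_right]
    _ = a ⊓ b ⊔ x ⊓ a ⊔ x ⊓ b ⊔ e := by rw [← sup_sup_distrib_left, ← sup_assoc]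
    _ ≤ _ := sup_le_sup (sup_le_sup (sup_le_sup le_rfl (le_inf inf_le_right le_sup_left))
      (le_inf le_sup_left inf_le_right)) (le_inf le_sup_right le_sup_right)

end Lattice

theorem Submodule.isProj_projection {R E : Type*} [Ring R] [AddCommGroup E] [Module R E]
    {p q : Submodule R E} (hpq : IsCompl p q) : LinearMap.IsProj p (p.projection q hpq) :=
  ⟨projection_apply_mem hpq, fun _ => projection_apply_of_mem_left hpq⟩

theorem Submodule.exists_isProj_commute {K V : Type*} [DivisionRing K] [AddCommGroup V]
    [Module K V] (S S' : Submodule K V) :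
    ∃ p q : Module.End K V, LinearMap.IsProj S p ∧ LinearMap.IsProj S' q ∧ Commute p q := by
  obtain ⟨W, W', hW, hW', htop⟩ := exists_isCompl_isCompl_sup_inf_eq_top S S'
  refine ⟨_, _, isProj_projection hW, isProj_projection hW', LinearMap.ext fun x => ?_⟩
  suffices ⊤ ≤ LinearMap.eqLocus (S.projection W hW * S'.projection W' hW')
      (S'.projection W' hW' * S.projection W hW) from this trivial
  rw [← htop]
  refine sup_le (sup_le (sup_le ?_ ?_) ?_) ?_ <;> intro x hx <;>
    simp [LinearMap.mem_eqLocus, projection_apply_of_mem_left, projection_apply_of_mem_right,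
      (Submodule.mem_inf.1 hx).1, (Submodule.mem_inf.1 hx).2]

namespace CategoryTheory

variable {C : Type*} [Category C] {D : Type*} [Category D]
variable {P B B' A : C} {fst : P ⟶ B} {snd : P ⟶ B'} {m : B ⟶ A} {m' : B' ⟶ A}

theorem comp_retraction_eq_self {X : C} {f : X ⟶ B} {g : X ⟶ B'} (w : f ≫ m = g ≫ m')
    {r : A ⟶ B} {r' : A ⟶ B'} (hr : m ≫ r = 𝟙 B) (hr' : m' ≫ r' = 𝟙 B') :
    f ≫ m ≫ r' ≫ m' ≫ r = f := by
  rw [reassoc_of% w, reassoc_of% hr', ← reassoc_of% w, hr, Category.comp_id]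

variable (fst snd m m') in
structure IsSplitPullback where
  w : fst ≫ m = snd ≫ m'
  retraction : A ⟶ B
  retraction' : A ⟶ B'
  lift : A ⟶ P
  m_retraction : m ≫ retraction = 𝟙 B
  m'_retraction' : m' ≫ retraction' = 𝟙 B'
  fst_m_lift : fst ≫ m ≫ lift = 𝟙 P
  lift_fst : lift ≫ fst = retraction' ≫ m' ≫ retraction
  lift_snd : lift ≫ snd = retraction ≫ m ≫ retraction'

namespace IsSplitPullback

theorem isPullback (h : IsSplitPullback fst snd m m') : IsPullback fst snd m m' := by
  refine ⟨⟨h.w⟩, ⟨PullbackCone.IsLimit.mk h.w (fun t => t.fst ≫ m ≫ h.lift) (fun t => ?_)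
    (fun t => ?_) (fun t l hl _ => ?_)⟩⟩
  · simp only [Category.assoc, h.lift_fst]
    exact comp_retraction_eq_self t.condition h.m_retraction h.m'_retraction'
  · rw [Category.assoc, Category.assoc, h.lift_snd, reassoc_of% h.m_retraction,
      reassoc_of% t.condition, h.m'_retraction', Category.comp_id]
  · rw [← hl, Category.assoc, h.fst_m_lift, Category.comp_id]

def map (h : IsSplitPullback fst snd m m') (F : C ⥤ D) :
    IsSplitPullback (F.map fst) (F.map snd) (F.map m) (F.map m') where
  w := by rw [← F.map_comp, h.w, F.map_comp]
  retraction := F.map h.retraction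
  retraction' := F.map h.retraction'
  lift := F.map h.lift
  m_retraction := by rw [← F.map_comp, h.m_retraction, F.map_id]
  m'_retraction' := by rw [← F.map_comp, h.m'_retraction', F.map_id]
  fst_m_lift := by rw [← F.map_comp, ← F.map_comp, h.fst_m_lift, F.map_id]
  lift_fst := by simp only [← F.map_comp, h.lift_fst]
  lift_snd := by simp only [← F.map_comp, h.lift_snd]

end IsSplitPullback

noncomputable def IsPullback.isSplitPullback (hpb : IsPullback fst snd m m')
    {r : A ⟶ B} {r' : A ⟶ B'} (hr : m ≫ r = 𝟙 B) (hr' : m' ≫ r' = 𝟙 B')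
    (hcomm : (r ≫ m) ≫ r' ≫ m' = (r' ≫ m') ≫ r ≫ m) :
    IsSplitPullback fst snd m m' where
  w := hpb.w
  retraction := r
  retraction' := r'
  lift := hpb.lift (r' ≫ m' ≫ r) (r ≫ m ≫ r') (by simpa only [Category.assoc] using hcomm.symm)
  m_retraction := hr
  m'_retraction' := hr'
  fst_m_lift := hpb.hom_ext
    (by simp only [Category.assoc, hpb.lift_fst, Category.id_comp]
        exact comp_retraction_eq_self hpb.w hr hr')
    (by rw [Category.assoc, Category.assoc, hpb.lift_snd, reassoc_of% hr, reassoc_of% hpb.w,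
          hr', Category.comp_id, Category.id_comp])
  lift_fst := hpb.lift_fst _ _ _
  lift_snd := hpb.lift_snd _ _ _

end CategoryTheory

namespace ModuleCat

variable {R : Type u} [Ring R] {A B : ModuleCat.{v} R}

theorem exists_retraction_of_isProj (m : B ⟶ A) [Mono m] {p : Module.End R A}
    (hp : LinearMap.IsProj (LinearMap.range m.hom) p) :
    ∃ r : A ⟶ B, m ≫ r = 𝟙 B ∧ r ≫ m = ofHom p := by
  have hm : Function.Injective m := (mono_iff_injective m).1 inferInstance
  let r : A ⟶ B := ofHom ((LinearEquiv.ofInjective m.hom hm).symm.toLinearMap ∘ₗ hp.codRestrict)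
  have hrm : r ≫ m = ofHom p := by ext a; simp [r, hp.codRestrict_apply]
  refine ⟨r, ?_, hrm⟩
  ext b
  apply hm
  change (r ≫ m) (m b) = m b
  rw [hrm]
  exact hp.map_id _ ⟨b, rfl⟩

theorem exists_retractions_commute {K : Type u} [DivisionRing K] {A B B' : ModuleCat.{v} K}
    (m : B ⟶ A) (m' : B' ⟶ A) [Mono m] [Mono m'] :
    ∃ (r : A ⟶ B) (r' : A ⟶ B'),
      m ≫ r = 𝟙 B ∧ m' ≫ r' = 𝟙 B' ∧ (r ≫ m) ≫ r' ≫ m' = (r' ≫ m') ≫ r ≫ m := by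
  obtain ⟨p, q, hp, hq, hpq⟩ :=
    Submodule.exists_isProj_commute (LinearMap.range m.hom) (LinearMap.range m'.hom)
  obtain ⟨r, hmr, hrm⟩ := exists_retraction_of_isProj m hp
  obtain ⟨r', hmr', hrm'⟩ := exists_retraction_of_isProj m' hq
  refine ⟨r, r', hmr, hmr', ?_⟩
  rw [hrm, hrm', ← ofHom_comp, ← ofHom_comp]
  exact congrArg ofHom hpq.eq.symm

end ModuleCat

theorem stmt12 {K : Type u} [Field K]
    {A B B' P : ModuleCat.{u} K} (m : B ⟶ A) (m' : B' ⟶ A)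
    [Mono m] [Mono m'] (fst : P ⟶ B) (snd : P ⟶ B')
    (hpb : IsPullback fst snd m m')
    {D : Type v} [Category.{w} D] (F : ModuleCat.{u} K ⥤ D) :
    IsPullback (F.map fst) (F.map snd) (F.map m) (F.map m') := by
  obtain ⟨r, r', hr, hr', hcomm⟩ := ModuleCat.exists_retractions_commute m m'
  exact ((hpb.isSplitPullback hr hr' hcomm).map F).isPullback
end

section
/- Let H : Set → Set be a functor with no distinguished elements. Then H preserves finite intersections, i.e., H preserves every pullback of two injective maps into a common codomain. -/
/-!
If the intersection `P` is empty, so is `H P`, since every element of `H ∅` is distinguished; and a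
common image `H m x = H m' y` would be distinguished once pushed to `H 1`, because the indicator
`A → 1 ⊕ 1` of the range of `m` turns the two coproduct injections into `m` and `m'`.
If `P` is nonempty, the square is split: `fst`, `m`, `m'` have retractions, and a retraction `r` of
`A` onto the range of `m'` maps the range of `m` into that of `P`. Such a square is a pullback that
every functor preserves.
-/

open CategoryTheory Limits

/-- An element `x ∈ H X` is distinguished if any parallel pair of maps is merged by `H` at `x`. -/
def Distinguished (H : Type u ⥤ Type u) {X : Type u} (x : H.obj X) : Prop :=
  ∀ (Y : Type u) (f g : X ⟶ Y), H.map f x = H.map g x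

namespace CategoryTheory

theorem Functor.isPullback_map_of_retractions {C : Type*} [Category C] (F : C ⥤ Type w)
    {P A B B' : C} {fst : P ⟶ B} {snd : P ⟶ B'} {m : B ⟶ A} {m' : B' ⟶ A}
    (sq : CommSq fst snd m m') [IsSplitMono m] [IsSplitMono m'] (q : B ⟶ P) (r : A ⟶ A)
    (hq : fst ≫ q = 𝟙 P) (hr : m' ≫ r = m') (hqr : q ≫ fst ≫ m = m ≫ r) :
    IsPullback (F.map fst) (F.map snd) (F.map m) (F.map m') := by
  have : IsSplitMono fst := .mk' ⟨q, hq⟩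
  have inj {X Y : C} (f : X ⟶ Y) [IsSplitMono f] : Function.Injective (F.map f) :=
    (mono_iff_injective _).1 inferInstance
  refine (Types.isPullback_iff _ _ _ _).2 ⟨(F.map_commSq sq).w, fun z z' h => inj fst h.1, ?_⟩
  intro x y hxy
  have hfst : F.map m (F.map fst (F.map q x)) = F.map m x := by
    calc F.map m (F.map fst (F.map q x)) = F.map (q ≫ fst ≫ m) x := by simp
      _ = F.map r (F.map m' y) := by rw [hqr, Functor.map_comp_apply, hxy]
      _ = F.map m x := by rw [← Functor.map_comp_apply, hr, hxy]
  refine ⟨F.map q x, inj m hfst, inj m' ?_⟩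
  rw [← Functor.map_comp_apply, ← sq.w, Functor.map_comp_apply, hfst, hxy]

namespace Types

theorem isSplitMono_of_injective {X Y : Type u} [Nonempty X] (f : X ⟶ Y)
    (hf : Function.Injective f) : IsSplitMono f :=
  .mk' ⟨TypeCat.ofHom (Function.invFun f), by ext x; exact Function.leftInverse_invFun hf x⟩

end Types

namespace Limits.Types

variable {P A B B' : Type u} {fst : P ⟶ B} {snd : P ⟶ B'} {m : B ⟶ A} {m' : B' ⟶ A}

theorem disjoint_range_of_isPullback [IsEmpty P] (hpb : IsPullback fst snd m m') :
    Disjoint (Set.range m) (Set.range m') := by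
  rw [Set.disjoint_left]
  rintro _ ⟨b, rfl⟩ ⟨b', hb'⟩
  obtain ⟨p, -⟩ := exists_of_isPullback hpb b b' hb'.symm
  exact isEmptyElim p

open Classical in
theorem exists_retractions_of_isPullback [Nonempty P] (hpb : IsPullback fst snd m m')
    (hm' : Function.Injective m') :
    ∃ (q : B ⟶ P) (r : A ⟶ A), fst ≫ q = 𝟙 P ∧ m' ≫ r = m' ∧ q ≫ fst ≫ m = m ≫ r := by
  have hw (p : P) : m (fst p) = m' (snd p) := ConcreteCategory.congr_hom hpb.w p
  have hfst : Function.Injective fst := fun p p' h =>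
    ext_of_isPullback hpb h (hm' (by rw [← hw, ← hw, h]))
  -- the default value of `r` is chosen to match that of `Function.invFun fst`
  refine ⟨TypeCat.ofHom (Function.invFun fst),
    TypeCat.ofHom fun a => if a ∈ Set.range m' then a else m (fst (Classical.arbitrary P)),
    ?_, ?_, ?_⟩
  · ext p
    exact Function.leftInverse_invFun hfst p
  · ext b'
    simp
  · ext b
    change m (fst (Function.invFun fst b)) =
      if m b ∈ Set.range m' then m b else m (fst (Classical.arbitrary P))
    split_ifs with hb
    · obtain ⟨b', hb'⟩ := hb
      obtain ⟨p, rfl, -⟩ := exists_of_isPullback hpb b b' hb'.symm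
      rw [Function.leftInverse_invFun hfst p]
    · have : ¬ ∃ p, fst p = b := by
        rintro ⟨p, rfl⟩
        exact hb ⟨snd p, (hw p).symm⟩
      rw [Function.invFun_neg this]

end Limits.Types

end CategoryTheory

namespace Distinguished

variable {H : Type u ⥤ Type u}

theorem of_isEmpty {X : Type u} [IsEmpty X] (x : H.obj X) : Distinguished H x := by
  intro Y f g
  obtain rfl : f = g := by
    ext a
    exact isEmptyElim a
  rfl

theorem of_map_inl_eq_map_inr {X : Type u} {x : H.obj X}
    (h : H.map (TypeCat.ofHom (Sum.inl : X → X ⊕ X)) x = H.map (TypeCat.ofHom Sum.inr) x) :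
    Distinguished H x := by
  intro Y f g
  calc H.map f x = H.map (TypeCat.ofHom (Sum.elim f g)) (H.map (TypeCat.ofHom Sum.inl) x) := by
        rw [← Functor.map_comp_apply]; rfl
    _ = H.map (TypeCat.ofHom (Sum.elim f g)) (H.map (TypeCat.ofHom Sum.inr) x) := by rw [h]
    _ = H.map g x := by rw [← Functor.map_comp_apply]; rfl

theorem of_map_eq_map_of_disjoint_range {A B B' : Type u} {m : B ⟶ A} {m' : B' ⟶ A}
    (hdisj : Disjoint (Set.range m) (Set.range m')) {x : H.obj B} {y : H.obj B'}
    (hxy : H.map m x = H.map m' y) :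
    Distinguished H (H.map (TypeCat.ofHom fun _ : A => PUnit.unit) (H.map m x)) := by
  classical
  let toUnit : A ⟶ PUnit.{u + 1} := TypeCat.ofHom fun _ => PUnit.unit
  let χ : A ⟶ PUnit.{u + 1} ⊕ PUnit.{u + 1} :=
    TypeCat.ofHom fun a => if a ∈ Set.range m then .inl .unit else .inr .unit
  have hm : (m ≫ toUnit) ≫ TypeCat.ofHom Sum.inl = m ≫ χ := by
    ext b
    simp [χ]
  have hm' : (m' ≫ toUnit) ≫ TypeCat.ofHom Sum.inr = m' ≫ χ := by
    ext b'
    change Sum.inr PUnit.unit = if m' b' ∈ Set.range m then _ else _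
    rw [if_neg (Set.disjoint_right.1 hdisj ⟨b', rfl⟩)]
  apply of_map_inl_eq_map_inr
  calc H.map (TypeCat.ofHom Sum.inl) (H.map toUnit (H.map m x))
      = H.map χ (H.map m x) := by simp only [← Functor.map_comp_apply, hm]
    _ = H.map χ (H.map m' y) := by rw [hxy]
    _ = H.map (TypeCat.ofHom Sum.inr) (H.map toUnit (H.map m' y)) := by
      simp only [← Functor.map_comp_apply, hm']
    _ = H.map (TypeCat.ofHom Sum.inr) (H.map toUnit (H.map m x)) := by rw [hxy]

end Distinguished

theorem stmt14 (H : Type u ⥤ Type u)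
    (hnd : ∀ (X : Type u) (x : H.obj X), ¬ Distinguished H x)
    {P A B B' : Type u} (fst : P ⟶ B) (snd : P ⟶ B') (m : B ⟶ A) (m' : B' ⟶ A)
    (hm : Function.Injective m) (hm' : Function.Injective m')
    (hpb : IsPullback fst snd m m') :
    IsPullback (H.map fst) (H.map snd) (H.map m) (H.map m') := by
  rcases isEmpty_or_nonempty P with hP | hP
  · have : IsEmpty (H.obj P) := ⟨fun z => hnd P z (.of_isEmpty z)⟩
    refine (Types.isPullback_iff _ _ _ _).2
      ⟨(H.map_commSq hpb.toCommSq).w, fun z => isEmptyElim z, fun x y hxy => ?_⟩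
    exact (hnd _ _ (.of_map_eq_map_of_disjoint_range
      (Types.disjoint_range_of_isPullback hpb) hxy)).elim
  · have : Nonempty B := hP.map fst
    have : Nonempty B' := hP.map snd
    have := Types.isSplitMono_of_injective m hm
    have := Types.isSplitMono_of_injective m' hm'
    obtain ⟨q, r, hq, hr, hqr⟩ := Types.exists_retractions_of_isPullback hpb hm'
    exact H.isPullback_map_of_retractions hpb.toCommSq q r hq hr hqr
end

section
/- Let H : Set → Set be a functor preserving finite products. Then either H preserves finite limits, or H is naturally isomorphic to the functor C₀₁ defined by C₀₁(∅) = ∅ and C₀₁(X) = a one-element set for all X ≠ ∅. -/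
open CategoryTheory Limits

/-- The set functor sending `∅` to `∅` and every nonempty set to a one-element set. -/
def C01 : Type u ⥤ Type u where
  obj X := ULift.{u} (PLift (Nonempty X))
  map f := TypeCat.ofHom (fun h => ⟨⟨h.down.down.map f⟩⟩)
  map_id := by intro X; ext x; exact Subsingleton.elim _ _
  map_comp := by intro X Y Z f g; ext x; exact Subsingleton.elim _ _

/-!
Write `2` for `ULift Bool`. Since `H` preserves binary products, an element `z : H X` that
cannot tell two maps `a, a' : X → B` apart cannot tell `x ↦ w (x, a x)` and `x ↦ w (x, a' x)`
apart either, for any `w : X × B → Y`.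

If `H` identifies the two constant maps `X → 2`, then, writing any `f, g : X → Y` as the
restrictions of one map `X × 2 → Y` along these, `H` identifies all parallel maps; applied to the
projections `X × X → X` this makes every `H X` a subsingleton. Then `H` is the terminal functor
(which preserves all limits) or `C01`, according as `H ∅` is inhabited or not.

Otherwise `H` preserves equalizers. If `H f z = H g z`, then `z` cannot tell the characteristic
map `χ` of the equalizer `E` from the constant map `true`. So `E` is nonempty (else `χ = false`
and `H` would identify the constant maps), and for a retraction `r : X → E` the composite
`X → E ⊆ X`, which is `x ↦ if χ x then x else r x`, acts on `z` like the identity. Hence `z`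
comes from `H r z`, uniquely since `H E → H X` has a retraction. Binary products, the terminal
object and equalizers give all finite limits.
-/

universe v w u

namespace SetFunctor

variable {H : Type u ⥤ Type u}

lemma map_const_apply_eq [Subsingleton (H.obj PUnit)] {X X' Y : Type u} (c : Y)
    (z : H.obj X) (z' : H.obj X') :
    H.map (↾fun _ => c : X ⟶ Y) z = H.map (↾fun _ => c : X' ⟶ Y) z' := by
  change H.map ((↾fun _ => PUnit.unit) ≫ (↾fun _ => c)) z
    = H.map ((↾fun _ => PUnit.unit) ≫ (↾fun _ => c)) z'
  rw [Functor.map_comp_apply, Functor.map_comp_apply, Subsingleton.elim (H.map _ z) (H.map _ z')]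

def ProdComparisonBijective (H : Type u ⥤ Type u) : Prop :=
  ∀ X Y : Type u, Function.Bijective fun z : H.obj (X × Y) =>
    (H.map (↾Prod.fst : X × Y ⟶ X) z, H.map (↾Prod.snd : X × Y ⟶ Y) z)

lemma ProdComparisonBijective.map_congr (hprod : ProdComparisonBijective H) {X B Y : Type u}
    (w : X × B → Y) {a a' : X → B} {z : H.obj X} (h : H.map (↾a) z = H.map (↾a') z) :
    H.map (↾fun x => w (x, a x)) z = H.map (↾fun x => w (x, a' x)) z := by
  have hgraph : H.map (↾fun x => (x, a x)) z = H.map (↾fun x => (x, a' x)) z := by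
    refine (hprod X B).injective (Prod.ext ?_ ?_)
    · simp only [← Functor.map_comp_apply]
      rfl
    · simp only [← Functor.map_comp_apply]
      exact h
  have := congrArg (H.map (↾w)) hgraph
  simp only [← Functor.map_comp_apply] at this
  exact this

def MergesBool (H : Type u ⥤ Type u) : Prop :=
  ∀ {X : Type u} (z : H.obj X),
    H.map (↾fun _ => ULift.up true : X ⟶ ULift.{u} Bool) z
      = H.map (↾fun _ => ULift.up false) z

lemma mergesBool_of_map_eq [Subsingleton (H.obj PUnit)] {X : Type u} {z : H.obj X}
    (h : H.map (↾fun _ => ULift.up true : X ⟶ ULift.{u} Bool) z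
      = H.map (↾fun _ => ULift.up false) z) :
    MergesBool H := fun z' => by
  rw [map_const_apply_eq _ z' z, h, map_const_apply_eq]

lemma map_eq_map_of_mergesBool (hprod : ProdComparisonBijective H) (hdeg : MergesBool H)
    {X Y : Type u} (f g : X ⟶ Y) : H.map f = H.map g := by
  ext z
  exact hprod.map_congr (fun p : X × ULift Bool => bif p.2.down then f p.1 else g p.1) (hdeg z)

lemma subsingleton_obj_of_mergesBool (hprod : ProdComparisonBijective H) (hdeg : MergesBool H)
    (X : Type u) : Subsingleton (H.obj X) := by
  refine ⟨fun z z' => ?_⟩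
  obtain ⟨w, hw⟩ := (hprod X X).surjective (z, z')
  obtain ⟨rfl, rfl⟩ := Prod.ext_iff.1 hw
  exact ConcreteCategory.congr_hom (map_eq_map_of_mergesBool hprod hdeg _ _) w

lemma nonempty_obj_iff [Nonempty (H.obj PUnit)] [IsEmpty (H.obj PEmpty)] (X : Type u) :
    Nonempty (H.obj X) ↔ Nonempty X := by
  refine ⟨fun ⟨z⟩ => ?_, fun ⟨x⟩ => ?_⟩
  · by_contra hX
    exact IsEmpty.false (H.map (↾fun x => (hX ⟨x⟩).elim : X ⟶ PEmpty) z)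
  · exact ⟨H.map (↾fun _ => x : PUnit ⟶ X) (Classical.arbitrary _)⟩

instance (X : Type u) : Subsingleton (C01.obj X) :=
  inferInstanceAs (Subsingleton (ULift (PLift _)))

lemma nonempty_iso_C01 (hsub : ∀ X, Subsingleton (H.obj X))
    (hne : ∀ X, Nonempty (H.obj X) ↔ Nonempty X) : Nonempty (H ≅ C01) :=
  ⟨NatIso.ofComponents (fun X => Equiv.toIso <|
    @equivOfSubsingletonOfSubsingleton _ _ (hsub X) inferInstance
      (fun z => ⟨⟨(hne X).1 ⟨z⟩⟩⟩) (fun h => ((hne X).2 h.down.down).some))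
    fun _ => ConcreteCategory.hom_ext _ _ fun _ => Subsingleton.elim _ _⟩

lemma preservesLimitsOfSize_of_subsingleton_of_nonempty (hsub : ∀ X, Subsingleton (H.obj X))
    (hne : ∀ X, Nonempty (H.obj X)) : PreservesLimitsOfSize.{v, w} H :=
  ⟨⟨⟨fun {c} _ => ⟨((Types.isLimit_iff (H.mapCone c)).2 fun _ _ =>
    ⟨(hne _).some, fun _ => (hsub _).allEq _ _, fun _ _ => (hsub _).allEq _ _⟩).some⟩⟩⟩⟩

noncomputable def isLimitBinaryFanOfBijective {P X Y : Type u} (p₁ : P ⟶ X) (p₂ : P ⟶ Y)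
    (h : Function.Bijective fun z => (p₁ z, p₂ z)) : IsLimit (BinaryFan.mk p₁ p₂) :=
  IsLimit.ofIsoLimit (Types.binaryProductLimit X Y) <|
    BinaryFan.ext (Equiv.ofBijective _ h).toIso.symm
      (by ext q; exact congrArg Prod.fst ((Equiv.ofBijective _ h).apply_symm_apply q).symm)
      (by ext q; exact congrArg Prod.snd ((Equiv.ofBijective _ h).apply_symm_apply q).symm)

lemma ProdComparisonBijective.preservesLimitsOfShape_pair (hprod : ProdComparisonBijective H) :
    PreservesLimitsOfShape (Discrete WalkingPair) H := by
  refine ⟨fun {K} => ?_⟩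
  have : PreservesLimit (pair (K.obj ⟨.left⟩) (K.obj ⟨.right⟩)) H :=
    preservesLimit_of_preserves_limit_cone (Types.binaryProductLimit _ _)
      ((isLimitMapConeBinaryFanEquiv H _ _).symm (isLimitBinaryFanOfBijective _ _ (hprod _ _)))
  exact preservesLimit_of_iso_diagram H (diagramIsoPair K).symm

lemma preservesLimitsOfShape_pempty [Nonempty (H.obj PUnit)] [Subsingleton (H.obj PUnit)] :
    PreservesLimitsOfShape (Discrete PEmpty.{1}) H :=
  have : PreservesLimit (Functor.empty.{0} (Type u)) H :=
    preservesLimit_of_preserves_limit_cone Types.isTerminalPUnit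
      ((isLimitMapConeEmptyConeEquiv H PUnit).symm
        ((Types.isTerminalEquivUnique _).symm (uniqueOfSubsingleton (Classical.arbitrary _))))
  preservesLimitsOfShape_pempty_of_preservesTerminal H

lemma ProdComparisonBijective.map_decide_eq (hprod : ProdComparisonBijective H) {X Y : Type u}
    [DecidableEq Y] (f g : X ⟶ Y) {z : H.obj X} (hz : H.map f z = H.map g z) :
    H.map (↾fun x => ULift.up (decide (f x = g x)) : X ⟶ ULift.{u} Bool) z
      = H.map (↾fun _ => ULift.up true) z := by
  have := hprod.map_congr (fun q : X × Y => ULift.up (decide (f q.1 = q.2)))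
    (a := fun x => g x) (a' := fun x => f x) hz.symm
  simpa only [decide_true] using this

lemma ProdComparisonBijective.existsUnique_map_val_eq (hprod : ProdComparisonBijective H)
    {X : Type u} {p : X → Prop} [DecidablePred p] (hp : ∃ x, p x) {z : H.obj X}
    (hz : H.map (↾fun x => ULift.up (decide (p x)) : X ⟶ ULift.{u} Bool) z
      = H.map (↾fun _ => ULift.up true) z) :
    ∃! e : H.obj (Subtype p), H.map (↾Subtype.val) e = z := by
  obtain ⟨x₀, hx₀⟩ := hp
  let r : X → Subtype p := fun x => if h : p x then ⟨x, h⟩ else ⟨x₀, hx₀⟩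
  have hretract : ∀ e, H.map (↾r) (H.map (↾Subtype.val) e) = e := fun e => by
    have : (↾Subtype.val ≫ ↾r : Subtype p ⟶ Subtype p) = 𝟙 _ := by
      ext s
      simp [r, s.2]
    rw [← Functor.map_comp_apply, this, Functor.map_id_apply]
  refine ⟨H.map (↾r) z, ?_, fun e he => by rw [← he, hretract]⟩
  beta_reduce
  have hcomp :
      (↾r ≫ ↾Subtype.val : X ⟶ X) = ↾fun x => bif decide (p x) then x else (r x).val := by
    ext x
    by_cases h : p x <;> simp [r, h]
  rw [← Functor.map_comp_apply, hcomp,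
    hprod.map_congr (fun q : X × ULift Bool => bif q.2.down then q.1 else (r q.1).val) hz]
  exact Functor.map_id_apply H X z

lemma ProdComparisonBijective.preservesLimitsOfShape_walkingParallelPair
    (hprod : ProdComparisonBijective H) [Subsingleton (H.obj PUnit)] (hdeg : ¬MergesBool H) :
    PreservesLimitsOfShape WalkingParallelPair H := by
  refine ⟨fun {K} => ?_⟩
  suffices ∀ {X Y : Type u} (f g : X ⟶ Y), PreservesLimit (parallelPair f g) H from
    preservesLimit_of_iso_diagram H (diagramIsoParallelPair K).symm
  intro X Y f g
  classical
  have w : (↾Subtype.val : {x // f x = g x} ⟶ X) ≫ f = ↾Subtype.val ≫ g := by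
    ext x
    exact x.2
  refine preservesLimit_of_preserves_limit_cone
    (Types.typeEqualizerOfUnique _ w fun x hx => ⟨⟨x, hx⟩, rfl, fun _ h => Subtype.ext h⟩)
    ?_
  refine (isLimitMapConeForkEquiv H w).symm (Types.typeEqualizerOfUnique _ _ fun z hz => ?_)
  have hχ := hprod.map_decide_eq f g hz
  refine hprod.existsUnique_map_val_eq ?_ hχ
  by_contra! hempty
  simp only [hempty, decide_false] at hχ
  exact hdeg (mergesBool_of_map_eq hχ.symm)

end SetFunctor

open SetFunctor

theorem stmt17 (H : Type u ⥤ Type u)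
    (hprod : ∀ X Y : Type u, Function.Bijective
      (fun z : H.obj (X × Y) =>
        (H.map (X := X × Y) (Y := X) (TypeCat.ofHom Prod.fst) z, H.map (X := X × Y) (Y := Y) (TypeCat.ofHom Prod.snd) z)))
    (hone : Nonempty (H.obj PUnit) ∧ Subsingleton (H.obj PUnit)) :
    Nonempty (PreservesFiniteLimits H) ∨ Nonempty (H ≅ C01) := by
  replace hprod : ProdComparisonBijective H := hprod
  obtain ⟨_, _⟩ := hone
  by_cases hdeg : MergesBool H
  · have hsub := subsingleton_obj_of_mergesBool hprod hdeg
    by_cases hE : Nonempty (H.obj PEmpty)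
    · have := preservesLimitsOfSize_of_subsingleton_of_nonempty.{0, 0} hsub
        fun _ => hE.map (H.map (↾PEmpty.elim))
      exact Or.inl ⟨inferInstance⟩
    · have : IsEmpty (H.obj PEmpty) := not_nonempty_iff.1 hE
      exact Or.inr (nonempty_iso_C01 hsub nonempty_obj_iff)
  · have := hprod.preservesLimitsOfShape_pair
    have : PreservesLimitsOfShape (Discrete PEmpty.{1}) H := preservesLimitsOfShape_pempty
    have := hprod.preservesLimitsOfShape_walkingParallelPair hdeg
    have : PreservesFiniteProducts H := .of_preserves_binary_and_terminal H
    exact Or.inl ⟨preservesFiniteLimits_of_preservesEqualizers_and_finiteProducts H⟩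
end
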